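/- Fix a center c = (c₁,c₂) ∈ ℝ² and a scale h > 0, and for a multi-index α = (α₁,α₂) ∈ ℕ² define the scaled monomial m_α(x,y) := ((x−c₁)/h)^{α₁}·((y−c₂)/h)^{α₂} and the scaled perpendicular field x⊥(x,y) := ((y−c₂)/h, −(x−c₁)/h). Then for every β = (β_x, β_y) ∈ ℕ², writing |β| := β_x + β_y, the following identity of vector fields holds on ℝ²: (0, m_β) = (h/(|β|+1))·∇m_{(β_x, β_y+1)} − (β_x/(|β|+1))·x⊥·m_{(β_x−1, β_y)}, where the second term is interpreted as zero when β_x = 0. -/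
import Mathlib


/-- Partial derivative in the first variable. -/
noncomputable def pdx (f : ℝ × ℝ → ℝ) (z : ℝ × ℝ) : ℝ := fderiv ℝ f z (1, 0)

/-- Partial derivative in the second variable. -/
noncomputable def pdy (f : ℝ × ℝ → ℝ) (z : ℝ × ℝ) : ℝ := fderiv ℝ f z (0, 1)

/-- Scaled monomial `m_α(x,y) = ((x−c₁)/h)^{α₁}·((y−c₂)/h)^{α₂}` with center `c`, scale `h`. -/
noncomputable def smon (c : ℝ × ℝ) (h : ℝ) (α : ℕ × ℕ) (z : ℝ × ℝ) : ℝ :=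
  ((z.1 - c.1) / h) ^ α.1 * ((z.2 - c.2) / h) ^ α.2

lemma smon_hasFDerivAt (c : ℝ × ℝ) (h : ℝ) (a b : ℕ) (z : ℝ × ℝ) :
    HasFDerivAt (smon c h (a, b))
      (((z.1 - c.1)/h)^a •
          (((b:ℝ) * ((z.2 - c.2)/h)^(b-1)) • ((1/h) • (ContinuousLinearMap.snd ℝ ℝ ℝ))) +
        ((z.2 - c.2)/h)^b •
          (((a:ℝ) * ((z.1 - c.1)/h)^(a-1)) • ((1/h) • (ContinuousLinearMap.fst ℝ ℝ ℝ)))) z := by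
  have h1 : HasFDerivAt (fun z : ℝ×ℝ => (z.1 - c.1)/h)
      ((1/h) • (ContinuousLinearMap.fst ℝ ℝ ℝ)) z := by
    simpa [div_eq_inv_mul, one_div, smul_eq_mul] using
      ((hasFDerivAt_fst (p := z)).sub_const c.1).const_mul (1/h)
  have h2 : HasFDerivAt (fun z : ℝ×ℝ => (z.2 - c.2)/h)
      ((1/h) • (ContinuousLinearMap.snd ℝ ℝ ℝ)) z := by
    simpa [div_eq_inv_mul, one_div, smul_eq_mul] using
      ((hasFDerivAt_snd (p := z)).sub_const c.2).const_mul (1/h)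
  have h1p := (hasDerivAt_pow a ((z.1 - c.1)/h)).comp_hasFDerivAt z h1
  have h2p := (hasDerivAt_pow b ((z.2 - c.2)/h)).comp_hasFDerivAt z h2
  exact h1p.mul h2p

lemma pdx_smon (c : ℝ × ℝ) (h : ℝ) (a b : ℕ) (z : ℝ × ℝ) :
    pdx (smon c h (a, b)) z
      = ((a:ℝ)/h) * ((z.1 - c.1)/h)^(a-1) * ((z.2 - c.2)/h)^b := by
  rw [pdx, (smon_hasFDerivAt c h a b z).fderiv]
  simp; ring

lemma pdy_smon (c : ℝ × ℝ) (h : ℝ) (a b : ℕ) (z : ℝ × ℝ) :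
    pdy (smon c h (a, b)) z
      = ((b:ℝ)/h) * ((z.1 - c.1)/h)^a * ((z.2 - c.2)/h)^(b-1) := by
  rw [pdy, (smon_hasFDerivAt c h a b z).fderiv]
  simp; ring

/-- Decomposition of the vector scaled monomial `(0, m_β)` into a gradient part and a
perpendicular part: `(0, m_β) = (h/(|β|+1))·∇m_{(βx,βy+1)} − (βx/(|β|+1))·x⊥·m_{(βx−1,βy)}`,
with `x⊥(x,y) = ((y−c₂)/h, −(x−c₁)/h)`; the second term vanishes when `βx = 0` since its
coefficient `βx/(|β|+1)` is zero. -/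
theorem vector_monomial_decomposition_y (c : ℝ × ℝ) (h : ℝ) (hh : 0 < h) (βx βy : ℕ) :
    ∀ z : ℝ × ℝ,
      ((0 : ℝ), smon c h (βx, βy) z)
        = ((h / ((βx : ℝ) + (βy : ℝ) + 1)) * pdx (smon c h (βx, βy + 1)) z
             - ((βx : ℝ) / ((βx : ℝ) + (βy : ℝ) + 1))
                 * (((z.2 - c.2) / h) * smon c h (βx - 1, βy) z),
           (h / ((βx : ℝ) + (βy : ℝ) + 1)) * pdy (smon c h (βx, βy + 1)) z
             - ((βx : ℝ) / ((βx : ℝ) + (βy : ℝ) + 1))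
                 * ((-(z.1 - c.1) / h) * smon c h (βx - 1, βy) z)) := by
  intro z
  have hne : h ≠ 0 := ne_of_gt hh
  have hN : (βx : ℝ) + (βy : ℝ) + 1 ≠ 0 := by positivity
  rw [pdx_smon, pdy_smon, Prod.ext_iff]
  simp only [smon]
  cases βx with
  | zero => constructor <;> (simp; try field_simp; try ring)
  | succ n =>
      constructor <;>
      · simp only [Nat.add_sub_cancel, Nat.succ_sub_one, pow_succ, Nat.cast_succ]
        field_simp
        try ring
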